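/- arXiv:1910.04582 — 4 statements merged into one kernel-verified Lean document; each statement's English description precedes it below -/
import Mathlib

section
/- Let n ≥ 1, let Ψ ∈ ℝ^{n×n} be symmetric positive definite, let λ > 0, and set p = 1 − (1+λ)^{-n/2} (note p ∈ (0,1)). Then for every z ∈ ℝⁿ, (1/p) · (1 − exp(−(λ/2) · zᵀ Ψ⁻¹ z)) · g_Ψ(z) = (1/p) · g_Ψ(z) − ((1−p)/p) · g_{(1+λ)^{-1}Ψ}(z). That is, the Bayes-updated density of the predicted error given triggering (and collision) is the signed mixture (1/p)·N(0,Ψ) − ((1−p)/p)·N(0, Ψ/(1+λ)) of two centered Gaussians (equation (16) of the paper). -/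
/-!
Write `q = zᵀ Ψ⁻¹ z` and `c = 1 + λ`. Shrinking the covariance to `Ψ / c` multiplies the
normalising constant by `c ^ (n / 2)` and the exponent by `c`, so
`(1 - p) · g_{Ψ/c}(z) = c ^ (-n/2) · g_{Ψ/c}(z) = exp (-(λ/2) q) · g_Ψ(z)`;
the identity is this one multiplied by `1 / p`.
-/

open Matrix MeasureTheory Real

/-- Centered Gaussian density with covariance `S` on `ℝⁿ`. -/
noncomputable def gaussDensity {n : ℕ} (S : Matrix (Fin n) (Fin n) ℝ) (z : Fin n → ℝ) : ℝ :=
  (((2 * Real.pi) • S).det) ^ (-(1 / 2) : ℝ) * Real.exp (-(1 / 2) * (z ⬝ᵥ S⁻¹ *ᵥ z))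

section GaussianScaling

variable {n : ℕ} {S : Matrix (Fin n) (Fin n) ℝ} {c : ℝ}

theorem dotProduct_inv_smul_mulVec (hS : IsUnit S.det) (hc : c ≠ 0) (z : Fin n → ℝ) :
    z ⬝ᵥ (c • S)⁻¹ *ᵥ z = c⁻¹ * (z ⬝ᵥ S⁻¹ *ᵥ z) := by
  have hinv : (c • S)⁻¹ = c⁻¹ • S⁻¹ := by
    simpa [Units.smul_def] using Matrix.inv_smul' (A := S) (Units.mk0 c hc) hS
  rw [hinv, smul_mulVec, dotProduct_smul, smul_eq_mul]

theorem det_two_pi_smul_smul_rpow (hS : 0 ≤ S.det) (hc : 0 < c) :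
    ((2 * π) • (c • S)).det ^ (-(1 / 2) : ℝ) =
      c ^ (-(n : ℝ) / 2) * ((2 * π) • S).det ^ (-(1 / 2) : ℝ) := by
  have hdet : 0 ≤ ((2 * π) • S).det := by
    rw [det_smul]
    exact mul_nonneg (pow_nonneg (by positivity) _) hS
  rw [smul_comm, det_smul, Fintype.card_fin, mul_rpow (by positivity) hdet,
    ← rpow_natCast, ← rpow_mul hc.le]
  ring_nf

theorem gaussDensity_smul (hS : S.PosDef) (hc : 0 < c) (z : Fin n → ℝ) :
    gaussDensity (c • S) z =
      c ^ (-(n : ℝ) / 2) * ((2 * π) • S).det ^ (-(1 / 2) : ℝ) *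
        exp (-(1 / 2) * (c⁻¹ * (z ⬝ᵥ S⁻¹ *ᵥ z))) := by
  rw [gaussDensity, det_two_pi_smul_smul_rpow hS.det_pos.le hc,
    dotProduct_inv_smul_mulVec (isUnit_iff_ne_zero.mpr hS.det_pos.ne') hc.ne']

theorem one_add_rpow_mul_gaussDensity_inv_smul (hS : S.PosDef) {lam : ℝ} (hlam : 0 < 1 + lam)
    (z : Fin n → ℝ) :
    (1 + lam) ^ (-(n : ℝ) / 2) * gaussDensity ((1 + lam)⁻¹ • S) z =
      exp (-(lam / 2) * (z ⬝ᵥ S⁻¹ *ᵥ z)) * gaussDensity S z := by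
  have hexp : exp (-(1 / 2) * ((1 + lam) * (z ⬝ᵥ S⁻¹ *ᵥ z))) =
      exp (-(lam / 2) * (z ⬝ᵥ S⁻¹ *ᵥ z)) * exp (-(1 / 2) * (z ⬝ᵥ S⁻¹ *ᵥ z)) := by
    rw [← exp_add]
    ring_nf
  rw [gaussDensity_smul hS (inv_pos.2 hlam), inv_inv, inv_rpow hlam.le, hexp, gaussDensity]
  field_simp

end GaussianScaling

theorem stmt2_general (n : ℕ) (Ψ : Matrix (Fin n) (Fin n) ℝ) (hΨ : Ψ.PosDef)
    (lam : ℝ) (hlam : 0 < lam) (p : ℝ) (hp : p = 1 - (1 + lam) ^ (-(n : ℝ) / 2))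
    (z : Fin n → ℝ) :
    (1 / p) * (1 - Real.exp (-(lam / 2) * (z ⬝ᵥ Ψ⁻¹ *ᵥ z))) * gaussDensity Ψ z =
      (1 / p) * gaussDensity Ψ z - ((1 - p) / p) * gaussDensity ((1 + lam)⁻¹ • Ψ) z := by
  have h1p : 1 - p = (1 + lam) ^ (-(n : ℝ) / 2) := by rw [hp]; ring
  rw [h1p]
  have hlam' : 0 < 1 + lam := by linarith
  linear_combination (1 / p) * one_add_rpow_mul_gaussDensity_inv_smul hΨ hlam' z

theorem stmt2 (n : ℕ) (hn : 1 ≤ n) (Ψ : Matrix (Fin n) (Fin n) ℝ) (hΨ : Ψ.PosDef)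
    (lam : ℝ) (hlam : 0 < lam) (p : ℝ) (hp : p = 1 - (1 + lam) ^ (-(n : ℝ) / 2))
    (z : Fin n → ℝ) :
    (1 / p) * (1 - Real.exp (-(lam / 2) * (z ⬝ᵥ Ψ⁻¹ *ᵥ z))) * gaussDensity Ψ z =
      (1 / p) * gaussDensity Ψ z - ((1 - p) / p) * gaussDensity ((1 + lam)⁻¹ • Ψ) z :=
  stmt2_general n Ψ hΨ lam hlam p hp z
end

section
/- Let n ≥ 1, let A ∈ ℝ^{n×n}, let η ∈ (0,1) with ρ(√(1−η)·A) < 1 (spectral radius of the complex lift), let W, Θ, Y ∈ ℝ^{n×n}, and let Φ̄ be the unique solution of Φ̄ = (1−η)(AΦ̄Aᵀ + W) + ηΘ. Then the real series Σ_{j=0}^{∞} [ (1−η)^{j+1}·tr(Aʲ W (Aʲ)ᵀ Y) + η(1−η)^{j}·tr(Aʲ Θ (Aʲ)ᵀ Y) ] converges and its sum equals tr(Φ̄ Y). (This yields the closed-form optimal average quadratic cost J_ps = tr(PW) + tr(Y Φ̄) of equation (12) in Lemma \ref{lem:PSTcost}.) -/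
/-!
With `B = √(1 - η) • A` and `C = (1 - η) • W + η • Θ` the fixed-point equation reads
`Φ̄ = B Φ̄ Bᵀ + C`, and unrolling it gives `Φ̄ = ∑_{j<N} Bʲ C (Bʲ)ᵀ + Bᴺ Φ̄ (Bᴺ)ᵀ`.
By Gelfand's formula `ρ(B) < 1` forces `‖Bᴺ‖ ≤ rᴺ` for some `r < 1`, so `∑ Bʲ X (Bʲ)ᵀ`
converges absolutely for every `X`; hence the remainder tends to `0` and
`Φ̄ = ∑ Bʲ C (Bʲ)ᵀ`. Since `Bʲ C (Bʲ)ᵀ = (1 - η)ʲ • Aʲ C (Aʲ)ᵀ`, multiplying by `Y` and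
taking traces gives the series term by term.
-/

open Filter Topology

theorem exists_norm_pow_le_of_spectralRadius_lt_one {A : Type*} [NormedRing A]
    [NormedAlgebra ℂ A] [CompleteSpace A] {a : A} (h : spectralRadius ℂ a < 1) :
    ∃ r : ℝ, 0 ≤ r ∧ r < 1 ∧ ∀ᶠ N in atTop, ‖a ^ N‖ ≤ r ^ N := by
  obtain ⟨r, hρr, hr1⟩ := exists_between h
  lift r to NNReal using hr1.ne_top
  refine ⟨r, r.coe_nonneg, by exact_mod_cast hr1, ?_⟩
  have hGelfand := spectrum.pow_nnnorm_pow_one_div_tendsto_nhds_spectralRadius a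
  filter_upwards [hGelfand.eventually_lt_const hρr, eventually_gt_atTop 0] with N hN hN0
  have hN0' : (0 : ℝ) < N := by exact_mod_cast hN0
  have hpow := ENNReal.rpow_lt_rpow hN hN0'
  rw [← ENNReal.rpow_mul, one_div, inv_mul_cancel₀ hN0'.ne', ENNReal.rpow_one,
    ENNReal.rpow_natCast] at hpow
  exact_mod_cast hpow.le

namespace Matrix

variable {n R : Type*} [Fintype n] [DecidableEq n] [CommRing R]

theorem sum_range_pow_mul_mul_transpose_pow_add {B C Φ : Matrix n n R}
    (hΦ : Φ = B * Φ * Bᵀ + C) (N : ℕ) :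
    ∑ j ∈ Finset.range N, B ^ j * C * (B ^ j)ᵀ + B ^ N * Φ * (B ^ N)ᵀ = Φ := by
  induction N with
  | zero => simp
  | succ N ih =>
    calc _ = ∑ j ∈ Finset.range N, B ^ j * C * (B ^ j)ᵀ
            + B ^ N * (B * Φ * Bᵀ + C) * (B ^ N)ᵀ := by
          simp only [Finset.sum_range_succ, pow_succ, transpose_mul, mul_add, add_mul,
            Matrix.mul_assoc]
          abel
      _ = Φ := by rw [← hΦ, ih]

theorem smul_pow_mul_mul_transpose_smul_pow (c : R) (M X : Matrix n n R) (j : ℕ) :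
    (c • M) ^ j * X * ((c • M) ^ j)ᵀ = (c * c) ^ j • (M ^ j * X * (M ^ j)ᵀ) := by
  rw [smul_pow, transpose_smul, smul_mul_assoc, smul_mul_assoc, mul_smul_comm, smul_smul,
    mul_pow]

open scoped Norms.Frobenius in
theorem summable_pow_mul_mul_transpose_pow {B : Matrix n n ℝ}
    (hB : spectralRadius ℂ (B.map (algebraMap ℝ ℂ)) < 1) (X : Matrix n n ℝ) :
    Summable fun j => B ^ j * X * (B ^ j)ᵀ := by
  obtain ⟨r, hr0, hr1, hbound⟩ := exists_norm_pow_le_of_spectralRadius_lt_one hB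
  have hnorm_pow (N : ℕ) : ‖B ^ N‖ = ‖B.map (algebraMap ℝ ℂ) ^ N‖ := by
    rw [← Matrix.map_pow, frobenius_norm_map_eq _ (algebraMap ℝ ℂ) Complex.norm_real]
  refine Summable.of_norm_bounded_eventually_nat
    ((summable_geometric_of_lt_one (by positivity) (by nlinarith : r * r < 1)).mul_left ‖X‖) ?_
  filter_upwards [hbound] with j hj
  rw [← hnorm_pow] at hj
  calc ‖B ^ j * X * (B ^ j)ᵀ‖ ≤ ‖B ^ j‖ * ‖X‖ * ‖B ^ j‖ := by
        grw [norm_mul_le, norm_mul_le, frobenius_norm_transpose]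
    _ ≤ r ^ j * ‖X‖ * r ^ j := by gcongr
    _ = ‖X‖ * (r * r) ^ j := by ring

theorem hasSum_pow_mul_mul_transpose_pow {B C Φ : Matrix n n ℝ}
    (hB : spectralRadius ℂ (B.map (algebraMap ℝ ℂ)) < 1) (hΦ : Φ = B * Φ * Bᵀ + C) :
    HasSum (fun j => B ^ j * C * (B ^ j)ᵀ) Φ := by
  have hrem : Tendsto (fun N => B ^ N * Φ * (B ^ N)ᵀ) atTop (𝓝 0) :=
    (summable_pow_mul_mul_transpose_pow hB Φ).tendsto_atTop_zero
  refine (summable_pow_mul_mul_transpose_pow hB C).hasSum_iff_tendsto_nat.mpr ?_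
  have hpartial (N : ℕ) :
      ∑ j ∈ Finset.range N, B ^ j * C * (B ^ j)ᵀ = Φ - B ^ N * Φ * (B ^ N)ᵀ :=
    eq_sub_of_add_eq (sum_range_pow_mul_mul_transpose_pow_add hΦ N)
  simpa only [hpartial, sub_zero] using tendsto_const_nhds.sub hrem

end Matrix

theorem HasSum.matrix_trace_mul_right {ι n : Type*} [Fintype n] {f : ι → Matrix n n ℝ}
    {Φ : Matrix n n ℝ} (h : HasSum f Φ) (Y : Matrix n n ℝ) :
    HasSum (fun j => (f j * Y).trace) (Φ * Y).trace :=
  (h.mul_right Y).map (Matrix.traceAddMonoidHom n ℝ) continuous_id.matrix_trace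

open Matrix

theorem stmt10_general (n : ℕ) (A : Matrix (Fin n) (Fin n) ℝ)
    (η : ℝ) (hη : η ∈ Set.Ioo (0 : ℝ) 1)
    (hρ : spectralRadius ℂ ((Real.sqrt (1 - η) • A).map (algebraMap ℝ ℂ)) < 1)
    (W Θ Y : Matrix (Fin n) (Fin n) ℝ) (Φbar : Matrix (Fin n) (Fin n) ℝ)
    (hΦ : Φbar = (1 - η) • (A * Φbar * Aᵀ + W) + η • Θ) :
    HasSum
      (fun j : ℕ =>
        (1 - η) ^ (j + 1) * (A ^ j * W * (A ^ j)ᵀ * Y).trace +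
          η * (1 - η) ^ j * (A ^ j * Θ * (A ^ j)ᵀ * Y).trace)
      ((Φbar * Y).trace) := by
  have hsq : √(1 - η) * √(1 - η) = 1 - η := Real.mul_self_sqrt (by linarith [hη.2])
  have hconj (j : ℕ) (X : Matrix (Fin n) (Fin n) ℝ) :
      (√(1 - η) • A) ^ j * X * ((√(1 - η) • A) ^ j)ᵀ =
        (1 - η) ^ j • (A ^ j * X * (A ^ j)ᵀ) := by
    rw [smul_pow_mul_mul_transpose_smul_pow, hsq]
  have hfix :
      Φbar = (√(1 - η) • A) * Φbar * (√(1 - η) • A)ᵀ + ((1 - η) • W + η • Θ) := by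
    have hconj₁ := hconj 1 Φbar
    rw [pow_one, pow_one, pow_one] at hconj₁
    conv_lhs => rw [hΦ]
    rw [hconj₁, smul_add, add_assoc]
  convert (hasSum_pow_mul_mul_transpose_pow hρ hfix).matrix_trace_mul_right Y
    using 2 with j
  simp only [hconj, mul_add, add_mul, smul_mul_assoc, mul_smul_comm, trace_add,
    trace_smul, smul_eq_mul]
  ring

theorem stmt10 (n : ℕ) (hn : 1 ≤ n) (A : Matrix (Fin n) (Fin n) ℝ)
    (η : ℝ) (hη : η ∈ Set.Ioo (0 : ℝ) 1)
    (hρ : spectralRadius ℂ ((Real.sqrt (1 - η) • A).map (algebraMap ℝ ℂ)) < 1)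
    (W Θ Y : Matrix (Fin n) (Fin n) ℝ) (Φbar : Matrix (Fin n) (Fin n) ℝ)
    (hΦ : Φbar = (1 - η) • (A * Φbar * Aᵀ + W) + η • Θ) :
    HasSum
      (fun j : ℕ =>
        (1 - η) ^ (j + 1) * (A ^ j * W * (A ^ j)ᵀ * Y).trace +
          η * (1 - η) ^ j * (A ^ j * Θ * (A ^ j)ᵀ * Y).trace)
      ((Φbar * Y).trace) :=
  stmt10_general n A η hη hρ W Θ Y Φbar hΦ
end

section
/- Let n ≥ 1 be a natural number, let p ∈ (0,1), let v ≥ 3 be a natural number and let j ∈ {1, …, v−2}. Define β : ℤ → ℝ by β(l) = (1−p)^{2/n} if l < 0, β(0) = (1 − (1−p)^{1+2/n})/p, and β(l) = 1 if l > 0 (real exponentiation). Then α(j) := p + Σ_{k=2}^{v−1} p(1−p)^{k−1} · Π_{l=2−k}^{2−k+j−1} β(l) = 1 − (1−p)^{v−1+2j/n}; in particular α(j) < 1. (Telescoping identity for the coefficients α(j) in the proof of Proposition 1, establishing L_μ < L_ps.) -/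
/-!
Write `q = 1 - p` and `c = 2/n`. The summand with `k = i + 2` is `p q^(i+1)` times the
product of `β` over the window `-i, …, -i + j - 1`. For `j ≤ i` the window is negative and the
product is `q^(cj)`; for `i < j` it consists of `i` negative indices, then `0`, then positive
indices, and `p β(0) = 1 - q^(1 + c)`. In both cases the summand equals `T i - T (i + 1)` with
`T i = q^(i + 1 + c min(i, j))`, so the sum telescopes to `q - T (v - 2)`.
-/

open Real Finset

section Window

variable {p c : ℝ} {β : ℤ → ℝ}

/-- The function `T` of the header: `1 - alphaTail p c j i` is the partial sum of `α(j)` over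
`k ≤ i + 1`. -/
noncomputable def alphaTail (p c : ℝ) (j i : ℕ) : ℝ :=
  (1 - p) ^ ((i : ℝ) + 1 + c * (min i j : ℕ))

lemma card_Icc_neg_window (i m : ℕ) : #(Icc (-(i : ℤ)) (-(i : ℤ) + m - 1)) = m := by
  rw [Int.card_Icc]; omega

lemma prod_Icc_neg_window (hq : 0 < 1 - p) (hβneg : ∀ l : ℤ, l < 0 → β l = (1 - p) ^ c)
    {i m : ℕ} (hm : m ≤ i) :
    ∏ l ∈ Icc (-(i : ℤ)) (-(i : ℤ) + m - 1), β l = (1 - p) ^ (c * m) := by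
  rw [prod_eq_pow_card fun l hl => hβneg l (by rw [mem_Icc] at hl; omega),
    card_Icc_neg_window, ← rpow_natCast, ← rpow_mul hq.le]

lemma prod_Icc_window_of_lt (hq : 0 < 1 - p)
    (hβneg : ∀ l : ℤ, l < 0 → β l = (1 - p) ^ c) (hβpos : ∀ l : ℤ, 0 < l → β l = 1)
    {i j : ℕ} (hij : i < j) :
    ∏ l ∈ Icc (-(i : ℤ)) (-(i : ℤ) + j - 1), β l = (1 - p) ^ (c * i) * β 0 := by
  have hsplit : Icc (-(i : ℤ)) (-(i : ℤ) + j - 1)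
      = Icc (-(i : ℤ)) (-(i : ℤ) + i - 1) ∪ insert 0 (Icc 1 (-(i : ℤ) + j - 1)) := by
    ext l; simp only [mem_Icc, mem_union, mem_insert]; omega
  have hdisj : Disjoint (Icc (-(i : ℤ)) (-(i : ℤ) + i - 1))
      (insert 0 (Icc 1 (-(i : ℤ) + j - 1))) := by
    rw [disjoint_left]; intro l; simp only [mem_Icc, mem_insert]; omega
  rw [hsplit, prod_union hdisj, prod_Icc_neg_window hq hβneg le_rfl, prod_insert (by simp),
    prod_eq_one fun l hl => hβpos l (by rw [mem_Icc] at hl; omega), mul_one]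

lemma summand_eq_alphaTail_sub (hq : 0 < 1 - p)
    (hβneg : ∀ l : ℤ, l < 0 → β l = (1 - p) ^ c)
    (hβzero : p * β 0 = 1 - (1 - p) ^ (1 + c))
    (hβpos : ∀ l : ℤ, 0 < l → β l = 1) (j i : ℕ) :
    p * (1 - p) ^ (i + 1) * ∏ l ∈ Icc (-(i : ℤ)) (-(i : ℤ) + j - 1), β l
      = alphaTail p c j i - alphaTail p c j (i + 1) := by
  have hpow (m : ℕ) :
      (1 - p) ^ (i + 1) * (1 - p) ^ (c * m) = (1 - p) ^ ((i : ℝ) + 1 + c * m) := by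
    rw [← rpow_natCast, ← rpow_add hq]; push_cast; ring_nf
  rw [alphaTail, alphaTail]
  rcases le_or_gt j i with hji | hij
  · have hexp : ((i + 1 : ℕ) : ℝ) + 1 + c * j = ((i : ℝ) + 1 + c * j) + 1 := by
      push_cast; ring
    rw [prod_Icc_neg_window hq hβneg hji, min_eq_right hji, min_eq_right (by omega), mul_assoc,
      hpow, hexp, rpow_add_one hq.ne']
    ring
  · have hexp :
        ((i + 1 : ℕ) : ℝ) + 1 + c * (i + 1 : ℕ) = ((i : ℝ) + 1 + c * i) + (1 + c) := by
      push_cast; ring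
    rw [prod_Icc_window_of_lt hq hβneg hβpos hij, min_eq_left hij.le,
      min_eq_left (by omega : i + 1 ≤ j),
      show p * (1 - p) ^ (i + 1) * ((1 - p) ^ (c * i) * β 0)
        = (1 - p) ^ (i + 1) * (1 - p) ^ (c * i) * (p * β 0) by ring,
      hpow, hβzero, hexp, rpow_add hq _ (1 + c)]
    ring

lemma alpha_eq_one_sub_alphaTail (hq : 0 < 1 - p)
    (hβneg : ∀ l : ℤ, l < 0 → β l = (1 - p) ^ c)
    (hβzero : p * β 0 = 1 - (1 - p) ^ (1 + c))
    (hβpos : ∀ l : ℤ, 0 < l → β l = 1) {v : ℕ} (hv : 2 ≤ v) (j : ℕ) :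
    p + ∑ k ∈ Icc 2 (v - 1),
        p * (1 - p) ^ (k - 1) * ∏ l ∈ Icc (2 - (k : ℤ)) (2 - (k : ℤ) + (j : ℤ) - 1), β l
      = 1 - alphaTail p c j (v - 2) := by
  have hIcc : Icc 2 (v - 1) = Ico 2 v := by ext k; simp only [mem_Icc, mem_Ico]; omega
  have hshift (i : ℕ) : 2 - ((2 + i : ℕ) : ℤ) = -(i : ℤ) := by push_cast; ring
  rw [hIcc, sum_Ico_eq_sum_range]
  simp only [hshift, show ∀ i, 2 + i - 1 = i + 1 by omega,
    summand_eq_alphaTail_sub hq hβneg hβzero hβpos j, sum_range_sub']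
  simp only [alphaTail, Nat.zero_min, CharP.cast_eq_zero, mul_zero, add_zero, zero_add, rpow_one]
  ring

lemma alphaTail_of_le {v j : ℕ} (hv : 2 ≤ v) (hj : j ≤ v - 2) :
    alphaTail p c j (v - 2) = (1 - p) ^ ((v : ℝ) - 1 + c * j) := by
  rw [alphaTail, min_eq_right hj, Nat.cast_sub hv]; push_cast; ring_nf

end Window

theorem stmt11_general (n : ℕ) (p : ℝ) (hp : p ∈ Set.Ioo (0 : ℝ) 1)
    (v : ℕ) (j : ℕ) (hj : j ∈ Finset.Icc 1 (v - 2))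
    (β : ℤ → ℝ)
    (hβneg : ∀ l : ℤ, l < 0 → β l = (1 - p) ^ (2 / (n : ℝ)))
    (hβzero : β 0 = (1 - (1 - p) ^ (1 + 2 / (n : ℝ))) / p)
    (hβpos : ∀ l : ℤ, 0 < l → β l = 1) :
    p + ∑ k ∈ Finset.Icc 2 (v - 1),
        p * (1 - p) ^ (k - 1) * ∏ l ∈ Finset.Icc (2 - (k : ℤ)) (2 - (k : ℤ) + (j : ℤ) - 1), β l =
      1 - (1 - p) ^ ((v : ℝ) - 1 + 2 * (j : ℝ) / (n : ℝ)) ∧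
    p + ∑ k ∈ Finset.Icc 2 (v - 1),
        p * (1 - p) ^ (k - 1) * ∏ l ∈ Finset.Icc (2 - (k : ℤ)) (2 - (k : ℤ) + (j : ℤ) - 1), β l
      < 1 := by
  obtain ⟨hp0, hp1⟩ := hp
  obtain ⟨hj1, hj2⟩ := mem_Icc.1 hj
  have hq : 0 < 1 - p := by linarith
  have hβzero' : p * β 0 = 1 - (1 - p) ^ (1 + 2 / (n : ℝ)) := by
    rw [hβzero, mul_div_cancel₀ _ hp0.ne']
  have hα := alpha_eq_one_sub_alphaTail hq hβneg hβzero' hβpos (v := v) (by omega) j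
  rw [alphaTail_of_le (by omega) hj2, div_mul_eq_mul_div] at hα
  exact ⟨hα, hα ▸ sub_lt_self 1 (rpow_pos_of_pos hq _)⟩

theorem stmt11 (n : ℕ) (hn : 1 ≤ n) (p : ℝ) (hp : p ∈ Set.Ioo (0 : ℝ) 1)
    (v : ℕ) (hv : 3 ≤ v) (j : ℕ) (hj : j ∈ Finset.Icc 1 (v - 2))
    (β : ℤ → ℝ)
    (hβneg : ∀ l : ℤ, l < 0 → β l = (1 - p) ^ (2 / (n : ℝ)))
    (hβzero : β 0 = (1 - (1 - p) ^ (1 + 2 / (n : ℝ))) / p)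
    (hβpos : ∀ l : ℤ, 0 < l → β l = 1) :
    p + ∑ k ∈ Finset.Icc 2 (v - 1),
        p * (1 - p) ^ (k - 1) * ∏ l ∈ Finset.Icc (2 - (k : ℤ)) (2 - (k : ℤ) + (j : ℤ) - 1), β l =
      1 - (1 - p) ^ ((v : ℝ) - 1 + 2 * (j : ℝ) / (n : ℝ)) ∧
    p + ∑ k ∈ Finset.Icc 2 (v - 1),
        p * (1 - p) ^ (k - 1) * ∏ l ∈ Finset.Icc (2 - (k : ℤ)) (2 - (k : ℤ) + (j : ℤ) - 1), β l
      < 1 :=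
  stmt11_general n p hp v j hj β hβneg hβzero hβpos
end

section
/- Let m ≥ 1 and let c : Fin m → ℝ with c_j > 0 for all j. Define p* : Fin m → ℝ by p*_j = c_j / (Σ_{i=1}^{m} c_i), and define the total network utility U(p) = Σ_{j=1}^{m} c_j · log( p_j · Π_{i≠j} (1 − p_i) ) for p : Fin m → ℝ with 0 < p_j < 1 for all j. Then p* satisfies 0 < p*_j < 1 for all j, and U(p) ≤ U(p*) for every p with 0 < p_j < 1 for all j, with equality only if p = p*. (The triggering probabilities p^{j*} = c^j/Σ_{i} c^i maximize the weighted proportional-fairness network utility, solving optimization problem (21).) -/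
/-!
Since `log (p j * ∏_{i ≠ j} (1 - p i)) = log (p j) + ∑_{i ≠ j} log (1 - p i)`, regrouping the double
sum separates the utility into `∑ j, (c j * log (p j) + (S - c j) * log (1 - p j))` with
`S = ∑ i, c i`. Each summand is a function of `p j` alone, and by the tangent-line bound
`log x ≤ log y + (x / y - 1)` it is maximized exactly at `p j = c j / S`.
-/

open Real Finset

namespace Real

theorem log_le_log_add_div_sub_one {x y : ℝ} (hx : 0 < x) (hy : 0 < y) :
    log x ≤ log y + (x / y - 1) := by
  have := log_le_sub_one_of_pos (div_pos hx hy)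
  rw [log_div hx.ne' hy.ne'] at this
  linarith

theorem log_lt_log_add_div_sub_one {x y : ℝ} (hx : 0 < x) (hy : 0 < y) (hxy : x ≠ y) :
    log x < log y + (x / y - 1) := by
  have := log_lt_sub_one_of_pos (div_pos hx hy) (by rwa [Ne, div_eq_one_iff_eq hy.ne'])
  rw [log_div hx.ne' hy.ne'] at this
  linarith

theorem mul_log_add_mul_log_one_sub_lt {a s x : ℝ} (ha : 0 < a) (has : a < s) (hx : 0 < x)
    (hx1 : x < 1) (hxa : x ≠ a / s) :
    a * log x + (s - a) * log (1 - x) < a * log (a / s) + (s - a) * log (1 - a / s) := by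
  have hs : 0 < s := ha.trans has
  have hy : 0 < a / s := div_pos ha hs
  have hy1 : 0 < 1 - a / s := by rw [sub_pos, div_lt_one hs]; exact has
  have h1 := mul_lt_mul_of_pos_left (log_lt_log_add_div_sub_one hx hy hxa) ha
  have h2 := mul_le_mul_of_nonneg_left (log_le_log_add_div_sub_one (sub_pos.2 hx1) hy1)
    (sub_pos.2 has).le
  have hcancel : a * (x / (a / s) - 1) + (s - a) * ((1 - x) / (1 - a / s) - 1) = 0 := by
    rw [one_sub_div hs.ne']
    field_simp [(sub_pos.2 has).ne']
    ring
  nlinarith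

theorem mul_log_add_mul_log_one_sub_le {a s x : ℝ} (ha : 0 < a) (has : a < s) (hx : 0 < x)
    (hx1 : x < 1) :
    a * log x + (s - a) * log (1 - x) ≤ a * log (a / s) + (s - a) * log (1 - a / s) := by
  rcases eq_or_ne x (a / s) with rfl | hxa
  · exact le_rfl
  · exact (mul_log_add_mul_log_one_sub_lt ha has hx hx1 hxa).le

end Real

theorem sum_mul_log_mul_prod_erase_one_sub {ι : Type*} [Fintype ι] [DecidableEq ι]
    (c p : ι → ℝ) (hp : ∀ j, p j ≠ 0) (hp1 : ∀ j, 1 - p j ≠ 0) :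
    ∑ j, c j * log (p j * ∏ i ∈ univ.erase j, (1 - p i)) =
      ∑ j, (c j * log (p j) + (∑ i, c i - c j) * log (1 - p j)) := by
  have hsplit : ∀ j, log (p j * ∏ i ∈ univ.erase j, (1 - p i)) =
      log (p j) + (∑ i, log (1 - p i) - log (1 - p j)) := fun j => by
    rw [log_mul (hp j) (prod_ne_zero_iff.2 fun i _ => hp1 i), log_prod fun i _ => hp1 i,
      sum_erase_eq_sub (mem_univ j)]
  simp only [hsplit, mul_add, mul_sub, sub_mul, sum_add_distrib, sum_sub_distrib, ← sum_mul,
    ← mul_sum]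

theorem single_lt_sum_of_pos {ι : Type*} [Fintype ι] [Nontrivial ι] {c : ι → ℝ}
    (hc : ∀ i, 0 < c i) (j : ι) : c j < ∑ i, c i := by
  obtain ⟨k, hkj⟩ := exists_ne j
  exact single_lt_sum hkj (mem_univ j) (mem_univ k) (hc k) fun i _ _ => (hc i).le

theorem stmt15 (m : ℕ) (hm : 2 ≤ m) (c : Fin m → ℝ) (hc : ∀ j, 0 < c j)
    (pstar : Fin m → ℝ) (hpstar : ∀ j, pstar j = c j / ∑ i : Fin m, c i) :
    (∀ j, 0 < pstar j ∧ pstar j < 1) ∧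
      ∀ p : Fin m → ℝ, (∀ j, 0 < p j ∧ p j < 1) →
        (∑ j : Fin m, c j * Real.log (p j * ∏ i ∈ Finset.univ.erase j, (1 - p i))) ≤
            (∑ j : Fin m,
              c j * Real.log (pstar j * ∏ i ∈ Finset.univ.erase j, (1 - pstar i))) ∧
          ((∑ j : Fin m, c j * Real.log (p j * ∏ i ∈ Finset.univ.erase j, (1 - p i))) =
              (∑ j : Fin m,
                c j * Real.log (pstar j * ∏ i ∈ Finset.univ.erase j, (1 - pstar i))) →
            p = pstar) := by
  set S := ∑ i, c i
  have : Nontrivial (Fin m) := Fin.nontrivial_iff_two_le.2 hm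
  have hcS : ∀ j, c j < S := single_lt_sum_of_pos hc
  have hpstar_mem : ∀ j, 0 < pstar j ∧ pstar j < 1 := fun j => by
    rw [hpstar j]
    exact ⟨div_pos (hc j) ((hc j).trans (hcS j)), (div_lt_one ((hc j).trans (hcS j))).2 (hcS j)⟩
  have hU : ∀ q : Fin m → ℝ, (∀ j, 0 < q j ∧ q j < 1) →
      ∑ j, c j * log (q j * ∏ i ∈ univ.erase j, (1 - q i)) =
        ∑ j, (c j * log (q j) + (S - c j) * log (1 - q j)) := fun q hq =>
    sum_mul_log_mul_prod_erase_one_sub c q (fun j => (hq j).1.ne')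
      fun j => (sub_pos.2 (hq j).2).ne'
  refine ⟨hpstar_mem, fun p hp => ?_⟩
  have hle : ∀ j ∈ univ, c j * log (p j) + (S - c j) * log (1 - p j) ≤
      c j * log (pstar j) + (S - c j) * log (1 - pstar j) := fun j _ => by
    rw [hpstar j]
    exact mul_log_add_mul_log_one_sub_le (hc j) (hcS j) (hp j).1 (hp j).2
  rw [hU p hp, hU pstar hpstar_mem, sum_eq_sum_iff_of_le hle]
  refine ⟨sum_le_sum hle, fun heq => funext fun j => ?_⟩
  by_contra hne
  have hj := heq j (mem_univ j)
  rw [hpstar j] at hne hj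
  exact hj.not_lt (mul_log_add_mul_log_one_sub_lt (hc j) (hcS j) (hp j).1 (hp j).2 hne)
end
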